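/- Fix n ≥ 1 and let Θ = Θ_k ⋯ Θ_1, where Θ_i : Γ(E_i) → Γ(E_{i+1}) (i = 1, …, k) are contractive multi-analytic operators, E_1 = E, E_{k+1} = E_*. In the Hilbert space 𝓚 := Γ(E_*) ⊕ (cl ran Δ_k) ⊕ ⋯ ⊕ (cl ran Δ_1) consider the subspace 𝐆 := {Θ f ⊕ Δ_kΘ_{k-1}⋯Θ_1 f ⊕ ⋯ ⊕ Δ_2Θ_1 f ⊕ Δ_1 f : f ∈ Γ(E)} and, for each j = 1, …, n, the operator X_j := L_j^{E_*} ⊕ C_j^{(k)} ⊕ ⋯ ⊕ C_j^{(1)} on 𝓚. Then X_j(𝐆) ⊆ 𝐆 for every j; consequently the model space 𝐇 := 𝓚 ⊖ cl(𝐆) satisfies X_j*(𝐇) ⊆ 𝐇 for every j. -/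

import Mathlib

set_option linter.unusedSectionVars false

noncomputable section
open ContinuousLinearMap
open scoped ENNReal NNReal ComplexInnerProductSpace
section Defect
variable {H K : Type*} [NormedAddCommGroup H] [InnerProductSpace ℂ H] [CompleteSpace H]
  [NormedAddCommGroup K] [InnerProductSpace ℂ K] [CompleteSpace K]

/-- The defect operator `Δ_A := (I - A*A)^{1/2}` of a contraction `A : H → K`. -/
noncomputable def defect (A : H →L[ℂ] K) : H →L[ℂ] H :=
  CFC.sqrt (1 - (ContinuousLinearMap.adjoint A).comp A)

/-- Closure of the range of an operator, as a submodule. -/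
noncomputable def clRan (A : H →L[ℂ] K) : Submodule ℂ K :=
  (LinearMap.range (A : H →ₗ[ℂ] K)).topologicalClosure

theorem defect_mem_clRan (A : H →L[ℂ] K) (x : H) : defect A x ∈ clRan (defect A) :=
  Submodule.le_topologicalClosure _ (LinearMap.mem_range_self (defect A : H →ₗ[ℂ] H) x)

instance clRan_completeSpace (A : H →L[ℂ] K) : CompleteSpace (clRan A) :=
  IsClosed.completeSpace_coe (hs := Submodule.isClosed_topologicalClosure _)
end Defect

/-- `A` is a contraction: a bounded operator of norm at most `1`. -/
def IsContraction {E F : Type*} [SeminormedAddCommGroup E] [SeminormedAddCommGroup F]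
    [NormedSpace ℂ E] [NormedSpace ℂ F] (A : E →L[ℂ] F) : Prop := ‖A‖ ≤ 1

section Chain
variable {E : ℕ → Type*} [∀ n, NormedAddCommGroup (E n)] [∀ n, InnerProductSpace ℂ (E n)]
  [∀ n, CompleteSpace (E n)]

/-- Transport along an equality of indices. -/
def castCLM {a b : ℕ} (h : a = b) : E a →L[ℂ] E b := by
  subst h; exact ContinuousLinearMap.id ℂ (E a)

/-- `segProd Θ a m = Θ_{a+m} ∘ ⋯ ∘ Θ_{a+1} : E a → E (a+m)` (in `1`-based notation):
the composition of `m` successive operators of the chain starting at index `a`. -/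
noncomputable def segProd (Θ : ∀ n, E n →L[ℂ] E (n + 1)) (a : ℕ) :
    ∀ m : ℕ, E a →L[ℂ] E (a + m)
  | 0 => ContinuousLinearMap.id ℂ (E a)
  | m + 1 => (Θ (a + m)).comp (segProd Θ a m)

/-- `chainProd Θ a b : E a → E b` is the composition of the operators of the chain
leading from `E a` to `E b` (for `a ≤ b`; junk value `0` otherwise). -/
noncomputable def chainProd (Θ : ∀ n, E n →L[ℂ] E (n + 1)) (a b : ℕ) : E a →L[ℂ] E b :=
  if h : a ≤ b then (castCLM (Nat.add_sub_cancel' h)).comp (segProd Θ a (b - a)) else 0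

/-- The tuple `(Δ_k Θ_{k-1}⋯Θ_1 f, …, Δ_2 Θ_1 f, Δ_1 f)` (component `i : Fin k`
corresponds to the `(i+1)`-st factor, in `1`-based notation) in the Hilbert (ℓ²)
direct sum of the closures of the ranges of the defect operators of the factors. -/
noncomputable def regTuple (Θ : ∀ n, E n →L[ℂ] E (n + 1)) (k : ℕ) (f : E 0) :
    PiLp 2 (fun i : Fin k => clRan (defect (Θ (i : ℕ)))) :=
  WithLp.toLp 2 (fun i => ⟨defect (Θ (i : ℕ)) (chainProd Θ 0 (i : ℕ) f), defect_mem_clRan _ _⟩)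

/-- `k`-regularity of the factorization `Θ_k ⋯ Θ_1`: the set
`{Δ_k Θ_{k-1}⋯Θ_1 f ⊕ ⋯ ⊕ Δ_2 Θ_1 f ⊕ Δ_1 f : f ∈ E_1}` is dense in the Hilbert
direct sum `(cl ran Δ_k) ⊕ ⋯ ⊕ (cl ran Δ_1)`. -/
def IsRegularFact (Θ : ∀ n, E n →L[ℂ] E (n + 1)) (k : ℕ) : Prop :=
  DenseRange (regTuple Θ k)

end Chain

instance PiLp.instCompleteSpace {ι : Type*} [Fintype ι] (p : ℝ≥0∞) (F : ι → Type*)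
    [∀ i, NormedAddCommGroup (F i)] [∀ i, CompleteSpace (F i)] :
    CompleteSpace (PiLp p F) :=
  inferInstance

section FockDef
/-- Words in the generators `{1, …, n}`: the free monoid on `Fin n`. -/
abbrev Word (n : ℕ) := List (Fin n)

/-- The full Fock space over `ℂⁿ` with coefficients in `E`, realized as
`ℓ²(F_n^+, E)`, the Hilbert space of square-summable `E`-valued families indexed by words. -/
abbrev Fock (n : ℕ) (E : Type u) [NormedAddCommGroup E] [InnerProductSpace ℂ E] : Type u :=
  lp (fun _ : Word n => E) 2

variable {n : ℕ} {E : Type*} [NormedAddCommGroup E] [InnerProductSpace ℂ E]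

/-- The underlying function of `L_i f`: `(L_i f)(α) = f(β)` if `α = iβ`, else `0`. -/
def shiftFun (i : Fin n) (f : Word n → E) : Word n → E
  | [] => 0
  | a :: β => if a = i then f β else 0

theorem shiftFun_cons (i : Fin n) (f : Word n → E) (β : Word n) :
    shiftFun i f (i :: β) = f β := by simp [shiftFun]

theorem shiftFun_eq_zero {i : Fin n} {f : Word n → E} {α : Word n}
    (hα : α ∉ Set.range (fun β : Word n => (i :: β : Word n))) : shiftFun i f α = 0 := by
  match α with
  | [] => rfl
  | a :: β =>
    have : ¬ (a = i) := by rintro rfl; exact hα ⟨β, rfl⟩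
    simp [shiftFun, this]

theorem cons_injective (i : Fin n) :
    Function.Injective (fun β : Word n => (i :: β : Word n)) := fun a b h => by
  simpa using h

theorem shiftFun_memℓp (i : Fin n) (f : Fock n E) : Memℓp (shiftFun i ⇑f) 2 := by
  refine memℓp_gen ?_
  have h0 : ∀ α ∉ Set.range (fun β : Word n => (i :: β : Word n)),
      ‖shiftFun i (⇑f) α‖ ^ (2 : ℝ≥0∞).toReal = 0 := by
    intro α hα
    rw [shiftFun_eq_zero hα]
    simp [Real.zero_rpow]
  refine ((cons_injective i).summable_iff h0).mp ?_
  have h1 : (fun α => ‖shiftFun i (⇑f) α‖ ^ (2 : ℝ≥0∞).toReal) ∘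
      (fun β : Word n => (i :: β : Word n)) = fun β => ‖f β‖ ^ (2 : ℝ≥0∞).toReal := by
    funext β
    simp [Function.comp, shiftFun_cons]
  rw [h1]
  exact (lp.memℓp f).summable (by norm_num)

theorem shiftFun_norm (i : Fin n) (f : Fock n E) :
    ‖(⟨shiftFun i ⇑f, shiftFun_memℓp i f⟩ : Fock n E)‖ = ‖f‖ := by
  have hp : 0 < (2 : ℝ≥0∞).toReal := by norm_num
  refine Real.rpow_left_injOn (by norm_num : (2 : ℝ≥0∞).toReal ≠ 0)
    (norm_nonneg _) (norm_nonneg _) ?_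
  simp only []
  rw [lp.norm_rpow_eq_tsum hp, lp.norm_rpow_eq_tsum hp]
  have h0 : (Function.support fun α => ‖shiftFun i (⇑f) α‖ ^ (2 : ℝ≥0∞).toReal) ⊆
      Set.range (fun β : Word n => (i :: β : Word n)) := by
    intro α hα
    simp only [Function.mem_support] at hα
    by_contra hr
    exact hα (by rw [shiftFun_eq_zero hr]; simp [Real.zero_rpow])
  rw [← (cons_injective i).tsum_eq h0]
  congr 1
  funext β
  simp [shiftFun_cons]

/-- The left creation operator `L_i` on the Fock space, as a linear map. -/
noncomputable def creationL (i : Fin n) : Fock n E →ₗ[ℂ] Fock n E where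
  toFun f := ⟨shiftFun i ⇑f, shiftFun_memℓp i f⟩
  map_add' f g := by
    apply lp.ext
    funext α
    match α with
    | [] =>
      show shiftFun i ⇑(f + g) [] = shiftFun i ⇑f [] + shiftFun i ⇑g []
      simp [shiftFun, lp.coeFn_add]
    | a :: β =>
      show shiftFun i ⇑(f + g) (a :: β) = shiftFun i ⇑f (a :: β) + shiftFun i ⇑g (a :: β)
      by_cases h : a = i <;> simp [shiftFun, h, lp.coeFn_add]
  map_smul' c f := by
    apply lp.ext
    funext α
    match α with
    | [] => simp [shiftFun, lp.coeFn_smul]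
    | a :: β =>
      by_cases h : a = i <;> simp [shiftFun, h, lp.coeFn_smul]

/-- The left creation operator `L_i = L_i^E ∈ B(Γ(E))`, defined by
`(L_i f)(α) = f(β)` if `α = iβ` for some word `β`, and `(L_i f)(α) = 0` otherwise. -/
noncomputable def creation (i : Fin n) : Fock n E →L[ℂ] Fock n E :=
  (creationL i).mkContinuous 1 (fun f => by
    rw [one_mul]
    exact le_of_eq (shiftFun_norm i f))


/-- The `E`-valued family supported at the empty word with value `v`. -/
def constFun (n : ℕ) (v : E) : Word n → E := fun α => if α = [] then v else 0

theorem constFun_memℓp (v : E) : Memℓp (constFun n v) 2 := by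
  refine (memℓp_zero ?_).of_exponent_ge zero_le
  refine (Set.finite_singleton ([] : Word n)).subset ?_
  intro α hα
  simp only [Set.mem_setOf_eq, constFun] at hα
  by_contra h
  simp only [Set.mem_singleton_iff] at h
  exact hα (if_neg h)

/-- The canonical embedding of `E` into `Γ(E)` (families supported at the empty word). -/
def fockConst (n : ℕ) (v : E) : Fock n E := ⟨constFun n v, constFun_memℓp v⟩

theorem fockConst_norm_le (f : Fock n E) :
    ‖(⟨constFun n (f []), constFun_memℓp _⟩ : Fock n E)‖ ≤ ‖f‖ := by
  have hp : 0 < (2 : ℝ≥0∞).toReal := by norm_num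
  rw [← Real.rpow_le_rpow_iff (norm_nonneg _) (norm_nonneg _) hp]
  rw [lp.norm_rpow_eq_tsum hp]
  have h1 : (∑' α : Word n, ‖constFun n (f []) α‖ ^ (2 : ℝ≥0∞).toReal) =
      ‖f []‖ ^ (2 : ℝ≥0∞).toReal := by
    refine tsum_eq_single ([] : Word n) ?_
    intro b' hb'
    simp [constFun, if_neg hb', Real.zero_rpow hp.ne']
  rw [h1]
  exact Real.rpow_le_rpow (norm_nonneg _) (lp.norm_apply_le_norm two_ne_zero f []) hp.le

/-- `P_∅`, the orthogonal projection of `Γ(E)` onto the subspace of families supported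
at the empty word, as a linear map. -/
noncomputable def projEmptyL : Fock n E →ₗ[ℂ] Fock n E where
  toFun f := ⟨constFun n (f []), constFun_memℓp _⟩
  map_add' f g := by
    apply lp.ext; funext α
    show constFun n ((f + g) []) α = constFun n (f []) α + constFun n (g []) α
    by_cases h : α = [] <;> simp [constFun, h, lp.coeFn_add]
  map_smul' c f := by
    apply lp.ext; funext α
    by_cases h : α = [] <;> simp [constFun, h, lp.coeFn_smul]

/-- `P_∅ = P_∅^E`, the orthogonal projection of `Γ(E)` onto the subspace of families
supported at the empty word (identified with `E`). -/
noncomputable def projEmpty : Fock n E →L[ℂ] Fock n E :=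
  projEmptyL.mkContinuous 1 (fun f => by rw [one_mul]; exact fockConst_norm_le f)

end FockDef

section Model
variable {n : ℕ} {Es : ℕ → Type*} [∀ m, NormedAddCommGroup (Es m)]
  [∀ m, InnerProductSpace ℂ (Es m)] [∀ m, CompleteSpace (Es m)]

variable (Θ : ∀ m, Fock n (Es m) →L[ℂ] Fock n (Es (m + 1))) (k : ℕ)

/-- The ambient space `𝓚 := Γ(E_*) ⊕₂ (cl ran Δ_k) ⊕₂ ⋯ ⊕₂ (cl ran Δ_1)` of the model,
realized as a Hilbert (ℓ²) direct sum. -/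
abbrev ModelSpace : Type _ :=
  WithLp 2 ((Fock n (Es k)) × PiLp 2 (fun i : Fin k => clRan (defect (Θ (i : ℕ)))))

/-- The map `f ↦ (Δ_k Θ_{k-1}⋯Θ_1 f, …, Δ_2 Θ_1 f, Δ_1 f)` as a continuous linear map
into the Hilbert direct sum of the `cl ran Δ_i`. -/
noncomputable def regTupleCLM :
    Fock n (Es 0) →L[ℂ] PiLp 2 (fun i : Fin k => clRan (defect (Θ (i : ℕ)))) :=
  ((PiLp.continuousLinearEquiv 2 ℂ
      (fun i : Fin k => clRan (defect (Θ (i : ℕ))))).symm.toContinuousLinearMap).comp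
    (ContinuousLinearMap.pi fun i : Fin k =>
      ((defect (Θ (i : ℕ))).comp (chainProd Θ 0 (i : ℕ))).codRestrict
        (clRan (defect (Θ (i : ℕ)))) (fun x => defect_mem_clRan _ _))

/-- The embedding `f ↦ Θ f ⊕ Δ_k Θ_{k-1}⋯Θ_1 f ⊕ ⋯ ⊕ Δ_1 f` of `Γ(E)` into `𝓚`; its range
is the subspace `𝐆`. -/
noncomputable def modelEmb : Fock n (Es 0) →L[ℂ] ModelSpace Θ k :=
  ((WithLp.prodContinuousLinearEquiv 2 ℂ _ _).symm.toContinuousLinearMap).comp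
    ((chainProd Θ 0 k).prod (regTupleCLM Θ k))

variable (Cfac : ∀ m, Fin n → (clRan (defect (Θ m)) →L[ℂ] clRan (defect (Θ m))))

/-- The diagonal operator `diag (C_j^{(k)}, …, C_j^{(1)})` on the Hilbert direct sum of
the `cl ran Δ_i`. -/
noncomputable def diagCLM (j : Fin n) :
    PiLp 2 (fun i : Fin k => clRan (defect (Θ (i : ℕ)))) →L[ℂ]
      PiLp 2 (fun i : Fin k => clRan (defect (Θ (i : ℕ)))) :=
  ((PiLp.continuousLinearEquiv 2 ℂ
      (fun i : Fin k => clRan (defect (Θ (i : ℕ))))).symm.toContinuousLinearMap).comp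
    ((ContinuousLinearMap.pi fun i : Fin k =>
        (Cfac (i : ℕ) j).comp (ContinuousLinearMap.proj i)).comp
      (PiLp.continuousLinearEquiv 2 ℂ
        (fun i : Fin k => clRan (defect (Θ (i : ℕ))))).toContinuousLinearMap)

/-- The operator `X_j := L_j^{E_*} ⊕ C_j^{(k)} ⊕ ⋯ ⊕ C_j^{(1)}` on `𝓚`. -/
noncomputable def Xop (j : Fin n) : ModelSpace Θ k →L[ℂ] ModelSpace Θ k :=
  ((WithLp.prodContinuousLinearEquiv 2 ℂ _ _).symm.toContinuousLinearMap).comp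
    (((creation j).prodMap (diagCLM Θ k Cfac j)).comp
      (WithLp.prodContinuousLinearEquiv 2 ℂ _ _).toContinuousLinearMap)

end Model

/-! Every ingredient of `modelEmb` intertwines the shifts: `Θ_i L_j = L_j Θ_i` and
`C_j^{(i)} Δ_i = Δ_i L_j`. Hence `X_j ∘ modelEmb = modelEmb ∘ L_j`, so `X_j` leaves `𝐆`
invariant, and then `X_j*` leaves `𝐆ᗮ = (cl 𝐆)ᗮ` invariant. -/

section Intertwining
variable {n : ℕ} {Es : ℕ → Type*} [∀ m, NormedAddCommGroup (Es m)]
  [∀ m, InnerProductSpace ℂ (Es m)] [∀ m, CompleteSpace (Es m)]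
  (Θ : ∀ m, Fock n (Es m) →L[ℂ] Fock n (Es (m + 1)))

theorem castCLM_comp_creation {a b : ℕ} (h : a = b) (j : Fin n) :
    (castCLM (E := fun m => Fock n (Es m)) h).comp (creation j) =
      (creation j).comp (castCLM (E := fun m => Fock n (Es m)) h) := by
  subst h; rfl

theorem segProd_comp_creation (a : ℕ) (j : Fin n) :
    ∀ {m : ℕ}, (∀ i < m, (Θ (a + i)).comp (creation j) = (creation j).comp (Θ (a + i))) →
      (segProd Θ a m).comp (creation j) = (creation j).comp (segProd Θ a m)
  | 0, _ => rfl
  | m + 1, hΘ => by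
    have ih := segProd_comp_creation a j fun i hi => hΘ i (Nat.lt_succ_of_lt hi)
    change ((Θ (a + m)).comp (segProd Θ a m)).comp (creation j) =
      (creation j).comp ((Θ (a + m)).comp (segProd Θ a m))
    rw [comp_assoc, ih, ← comp_assoc, hΘ m m.lt_succ_self, comp_assoc]

theorem chainProd_comp_creation (j : Fin n) {a b : ℕ}
    (hΘ : ∀ i, a ≤ i → i < b → (Θ i).comp (creation j) = (creation j).comp (Θ i)) :
    (chainProd Θ a b).comp (creation j) = (creation j).comp (chainProd Θ a b) := by
  unfold chainProd
  split_ifs with hab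
  · have hseg := segProd_comp_creation Θ a j (m := b - a)
      fun i hi => hΘ (a + i) (Nat.le_add_right a i) (by omega)
    rw [comp_assoc, hseg, ← comp_assoc, castCLM_comp_creation, comp_assoc]
  · rw [zero_comp, comp_zero]

variable {k : ℕ} (hΘ : ∀ i < k, ∀ j : Fin n, (Θ i).comp (creation j) = (creation j).comp (Θ i))
  (Cfac : ∀ m, Fin n → (clRan (defect (Θ m)) →L[ℂ] clRan (defect (Θ m))))
  (hCfac : ∀ m < k, ∀ (j : Fin n) (x : Fock n (Es m)),
    Cfac m j ⟨defect (Θ m) x, defect_mem_clRan _ _⟩ =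
      ⟨defect (Θ m) (creation j x), defect_mem_clRan _ _⟩)
include hΘ

theorem chainProd_zero_creation (j : Fin n) {m : ℕ} (hm : m ≤ k) (f : Fock n (Es 0)) :
    chainProd Θ 0 m (creation j f) = creation j (chainProd Θ 0 m f) :=
  congr($(chainProd_comp_creation Θ j fun i _ hi => hΘ i (by omega) j) f)

include hCfac

theorem diagCLM_regTupleCLM (j : Fin n) (f : Fock n (Es 0)) :
    diagCLM Θ k Cfac j (regTupleCLM Θ k f) = regTupleCLM Θ k (creation j f) := by
  refine PiLp.ext fun i => ?_
  change Cfac i j ⟨defect (Θ i) (chainProd Θ 0 i f), defect_mem_clRan _ _⟩ =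
    ⟨defect (Θ i) (chainProd Θ 0 i (creation j f)), defect_mem_clRan _ _⟩
  rw [hCfac i i.isLt, chainProd_zero_creation Θ hΘ j i.isLt.le]

theorem Xop_comp_modelEmb (j : Fin n) :
    (Xop Θ k Cfac j).comp (modelEmb Θ k) = (modelEmb Θ k).comp (creation j) := by
  ext1 f
  simp only [Xop, modelEmb, comp_apply, ContinuousLinearEquiv.coe_coe,
    ContinuousLinearEquiv.apply_symm_apply, prod_apply, coe_prodMap', Prod.map]
  rw [chainProd_zero_creation Θ hΘ j le_rfl, diagCLM_regTupleCLM Θ hΘ Cfac hCfac]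

end Intertwining

theorem ContinuousLinearMap.mapsTo_range_of_comp_eq {R E F : Type*} [Semiring R]
    [TopologicalSpace E] [AddCommMonoid E] [Module R E]
    [TopologicalSpace F] [AddCommMonoid F] [Module R F]
    {T : F →L[R] F} {A : E →L[R] F} {S : E →L[R] E} (h : T.comp A = A.comp S) :
    Set.MapsTo T (Set.range A) (Set.range A) := by
  rintro _ ⟨x, rfl⟩
  exact ⟨S x, congr($h x).symm⟩

theorem ContinuousLinearMap.adjoint_mapsTo_orthogonal {𝕜 E : Type*} [RCLike 𝕜]
    [NormedAddCommGroup E] [InnerProductSpace 𝕜 E] [CompleteSpace E]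
    {T : E →L[𝕜] E} {U : Submodule 𝕜 E} (h : Set.MapsTo T U U) :
    Set.MapsTo (adjoint T) Uᗮ Uᗮ := by
  have hU : U ∈ Module.End.invtSubmodule (adjoint (adjoint T)).toLinearMap := by
    rwa [adjoint_adjoint, Module.End.mem_invtSubmodule_iff_mapsTo]
  exact (Module.End.mem_invtSubmodule_iff_mapsTo _).mp (orthogonal_mem_invtSubmodule hU)

theorem modelSpace_invariant_general {n : ℕ} {Es : ℕ → Type*}
    [∀ m, NormedAddCommGroup (Es m)] [∀ m, InnerProductSpace ℂ (Es m)]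
    [∀ m, CompleteSpace (Es m)]
    (k : ℕ)
    (Θ : ∀ m, Fock n (Es m) →L[ℂ] Fock n (Es (m + 1)))
    (hΘma : ∀ i < k, ∀ j : Fin n, (Θ i).comp (creation j) = (creation j).comp (Θ i))
    (Cfac : ∀ m, Fin n → (clRan (defect (Θ m)) →L[ℂ] clRan (defect (Θ m))))
    (hCfac : ∀ m < k, ∀ (j : Fin n) (x : Fock n (Es m)),
      Cfac m j ⟨defect (Θ m) x, defect_mem_clRan _ _⟩ =
        ⟨defect (Θ m) (creation j x), defect_mem_clRan _ _⟩) :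
    (∀ j : Fin n, Set.MapsTo (Xop Θ k Cfac j)
      (Set.range (modelEmb Θ k)) (Set.range (modelEmb Θ k))) ∧
    (∀ j : Fin n, Set.MapsTo (ContinuousLinearMap.adjoint (Xop Θ k Cfac j))
      (((LinearMap.range (modelEmb Θ k : Fock n (Es 0) →ₗ[ℂ] ModelSpace Θ k)).topologicalClosure)ᗮ : Set (ModelSpace Θ k))
      (((LinearMap.range (modelEmb Θ k : Fock n (Es 0) →ₗ[ℂ] ModelSpace Θ k)).topologicalClosure)ᗮ : Set (ModelSpace Θ k))) := by
  have hG (j : Fin n) : Set.MapsTo (Xop Θ k Cfac j)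
      (Set.range (modelEmb Θ k)) (Set.range (modelEmb Θ k)) :=
    mapsTo_range_of_comp_eq (Xop_comp_modelEmb Θ hΘma Cfac hCfac j)
  refine ⟨hG, fun j => ?_⟩
  rw [Submodule.orthogonal_closure]
  exact adjoint_mapsTo_orthogonal (by simpa only [LinearMap.coe_range, coe_coe] using hG j)

/-- For a factorization `Θ = Θ_k ⋯ Θ_1` into contractive multi-analytic
operators, the subspace `𝐆 = {Θf ⊕ Δ_kΘ_{k-1}⋯Θ_1 f ⊕ ⋯ ⊕ Δ_1 f}` of
`𝓚 = Γ(E_*) ⊕ (cl ran Δ_k) ⊕ ⋯ ⊕ (cl ran Δ_1)` is invariant under each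
`X_j = L_j ⊕ C_j^{(k)} ⊕ ⋯ ⊕ C_j^{(1)}`; consequently the model space `𝐇 = 𝓚 ⊖ cl 𝐆`
is invariant under each `X_j*`. -/
theorem modelSpace_invariant {n : ℕ} (hn : 1 ≤ n) {Es : ℕ → Type*}
    [∀ m, NormedAddCommGroup (Es m)] [∀ m, InnerProductSpace ℂ (Es m)]
    [∀ m, CompleteSpace (Es m)]
    (k : ℕ) (hk : 1 ≤ k)
    (Θ : ∀ m, Fock n (Es m) →L[ℂ] Fock n (Es (m + 1)))
    (hΘc : ∀ i < k, IsContraction (Θ i))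
    (hΘma : ∀ i < k, ∀ j : Fin n, (Θ i).comp (creation j) = (creation j).comp (Θ i))
    (Cfac : ∀ m, Fin n → (clRan (defect (Θ m)) →L[ℂ] clRan (defect (Θ m))))
    (hCfac : ∀ m < k, ∀ (j : Fin n) (x : Fock n (Es m)),
      Cfac m j ⟨defect (Θ m) x, defect_mem_clRan _ _⟩ =
        ⟨defect (Θ m) (creation j x), defect_mem_clRan _ _⟩) :
    (∀ j : Fin n, Set.MapsTo (Xop Θ k Cfac j)
      (Set.range (modelEmb Θ k)) (Set.range (modelEmb Θ k))) ∧
    (∀ j : Fin n, Set.MapsTo (ContinuousLinearMap.adjoint (Xop Θ k Cfac j))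
      (((LinearMap.range (modelEmb Θ k : Fock n (Es 0) →ₗ[ℂ] ModelSpace Θ k)).topologicalClosure)ᗮ : Set (ModelSpace Θ k))
      (((LinearMap.range (modelEmb Θ k : Fock n (Es 0) →ₗ[ℂ] ModelSpace Θ k)).topologicalClosure)ᗮ : Set (ModelSpace Θ k))) :=
  modelSpace_invariant_general k Θ hΘma Cfac hCfac

end
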